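/- In the root system D_4 realized in ℝ^4, the four roots λ_1 − λ_2, λ_1 + λ_2, λ_3 − λ_4, λ_3 + λ_4 are pairwise M-equivalent: for every root γ of D_4 and any two roots α, β in this set, 2⟨γ,α⟩/⟨γ,γ⟩ ≡ 2⟨γ,β⟩/⟨γ,γ⟩ (mod 2). -/

import Mathlib

noncomputable section

/-- Standard dot product on `ℝⁿ`. -/
def dotp {n : ℕ} (x y : Fin n → ℝ) : ℝ := ∑ i, x i * y i

/-- Killing number `2⟨γ,α⟩/⟨γ,γ⟩`. -/
def kil {n : ℕ} (γ α : Fin n → ℝ) : ℝ := 2 * dotp γ α / dotp γ γ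

/-- Standard basis vector `λ_a` of `ℝⁿ`. -/
def lamv {n : ℕ} (a : Fin n) : Fin n → ℝ := fun i => if i = a then 1 else 0

/-- Roots of `D_l` in `ℝ^l`: the vectors `±λ_a ± λ_b`, `a ≠ b`. -/
def rootsD (n : ℕ) : Set (Fin n → ℝ) :=
  {v | ∃ a b : Fin n, a ≠ b ∧
        (v = lamv a + lamv b ∨ v = lamv a - lamv b ∨ v = -lamv a - lamv b)}

/-!
For a root `γ` of `D_4` we have `⟨γ, γ⟩ = 2`, so the Killing number of `α = λ_i ± λ_j` is
`⟨γ, α⟩ = γ_i ± γ_j`. The coordinates of `γ` are integers with even sum, hence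
`γ_1 ∓ γ_2 ≡ γ_1 + γ_2 ≡ -(γ_3 + γ_4) ≡ γ_3 ∓ γ_4 (mod 2)`.
-/

open Matrix AddCommGroup

section

variable {n : ℕ}

lemma dotp_eq_dotProduct (x y : Fin n → ℝ) : dotp x y = x ⬝ᵥ y := rfl

lemma dotp_lamv (γ : Fin n → ℝ) (a : Fin n) : dotp γ (lamv a) = γ a := by
  simp [dotp, lamv]

lemma dotp_lamv_add_lamv (γ : Fin n → ℝ) (a b : Fin n) :
    dotp γ (lamv a + lamv b) = γ a + γ b := by
  rw [dotp_eq_dotProduct, dotProduct_add, ← dotp_eq_dotProduct, ← dotp_eq_dotProduct, dotp_lamv,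
    dotp_lamv]

lemma dotp_lamv_sub_lamv (γ : Fin n → ℝ) (a b : Fin n) :
    dotp γ (lamv a - lamv b) = γ a - γ b := by
  rw [dotp_eq_dotProduct, dotProduct_sub, ← dotp_eq_dotProduct, ← dotp_eq_dotProduct, dotp_lamv,
    dotp_lamv]

lemma kil_eq_dotp {γ : Fin n → ℝ} (hγ : dotp γ γ = 2) (α : Fin n → ℝ) :
    kil γ α = dotp γ α := by
  rw [kil, hγ, mul_div_cancel_left₀ _ two_ne_zero]

lemma dotp_self_of_mem_rootsD {γ : Fin n → ℝ} (hγ : γ ∈ rootsD n) : dotp γ γ = 2 := by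
  obtain ⟨a, b, hab, rfl | rfl | rfl⟩ := hγ <;>
  simp [dotp, lamv, Finset.sum_add_distrib, Finset.sum_sub_distrib, mul_add, mul_sub, mul_ite, hab,
    hab.symm, Finset.sum_ite_eq'] <;> norm_num

def rootLatticeD (n : ℕ) : Set (Fin n → ℝ) :=
  {γ | ∃ c : Fin n → ℤ, (∀ i, γ i = c i) ∧ Even (∑ i, c i)}

lemma rootsD_subset_rootLatticeD : rootsD n ⊆ rootLatticeD n := by
  rintro γ ⟨a, b, hab, rfl | rfl | rfl⟩
  · refine ⟨Pi.single a 1 + Pi.single b 1, fun i => ?_, ?_⟩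
    · simp [lamv, Pi.single_apply]
    · simp [Finset.sum_add_distrib]
  · refine ⟨Pi.single a 1 - Pi.single b 1, fun i => ?_, ?_⟩
    · simp [lamv, Pi.single_apply]
    · simp [Finset.sum_sub_distrib]
  · refine ⟨-Pi.single a 1 - Pi.single b 1, fun i => ?_, ?_⟩
    · simp [lamv, Pi.single_apply]
    · simp [Finset.sum_sub_distrib]

end

lemma dotp_modEq_of_mem_rootLatticeD {γ : Fin 4 → ℝ} (hγ : γ ∈ rootLatticeD 4) {α : Fin 4 → ℝ}
    (hα : α ∈ ({lamv 0 - lamv 1, lamv 0 + lamv 1, lamv 2 - lamv 3, lamv 2 + lamv 3} :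
      Set (Fin 4 → ℝ))) :
    dotp γ α ≡ γ 0 + γ 1 [PMOD 2] := by
  obtain ⟨c, hc, hc_even⟩ := hγ
  obtain ⟨s, hs⟩ : Even (c 0 + c 1 + c 2 + c 3) := by simpa [Fin.sum_univ_four] using hc_even
  simp only [Set.mem_insert_iff, Set.mem_singleton_iff] at hα
  rcases hα with rfl | rfl | rfl | rfl <;>
    simp only [dotp_lamv_add_lamv, dotp_lamv_sub_lamv, hc] <;>
    norm_cast <;> rw [modEq_iff_intModEq, Int.ModEq] <;> omega

/-- In `D_4`, the four roots `λ_1 − λ_2, λ_1 + λ_2, λ_3 − λ_4, λ_3 + λ_4` are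
pairwise M-equivalent. (0-based indices.) -/
theorem stmt11 :
    ∀ α ∈ ({lamv 0 - lamv 1, lamv 0 + lamv 1, lamv 2 - lamv 3, lamv 2 + lamv 3} :
        Set (Fin 4 → ℝ)),
      ∀ β ∈ ({lamv 0 - lamv 1, lamv 0 + lamv 1, lamv 2 - lamv 3, lamv 2 + lamv 3} :
        Set (Fin 4 → ℝ)),
      ∀ γ ∈ rootsD 4, ∃ k : ℤ, kil γ α - kil γ β = 2 * k := by
  intro α hα β hβ γ hγ
  have hL := rootsD_subset_rootLatticeD hγ
  have hmod : kil γ β ≡ kil γ α [PMOD 2] := by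
    rw [kil_eq_dotp (dotp_self_of_mem_rootsD hγ), kil_eq_dotp (dotp_self_of_mem_rootsD hγ)]
    exact (dotp_modEq_of_mem_rootLatticeD hL hβ).trans
      (dotp_modEq_of_mem_rootLatticeD hL hα).symm
  obtain ⟨k, hk⟩ := modEq_iff_zsmul'.1 hmod
  exact ⟨k, by rw [hk, zsmul_eq_mul, mul_comm]⟩
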